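/- Let K ⊆ {0,1,…,m} with 0 ∈ K, and let v and v̄ be multi-unit valuations on m items such that v̄(s̄) − v̄(s) ≥ v(s̄) − v(s) for all quantities s̄ > s in {0,…,m}. Then the projections onto K satisfy v̄^K(s̄) − v̄^K(s) ≥ v^K(s̄) − v^K(s) for all s̄ > s in {0,…,m}. Consequently, for any single-crossing set V of multi-unit valuations, the set of projections V^K = { v^K : v ∈ V } is single-crossing with the order inherited from V. -/
import Mathlib


/-- Projection of a multi-unit valuation `v` onto a set of quantities `K`
(containing `0`): `v^K(s) = max { v(x) : x ∈ K, x ≤ s }`. -/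
noncomputable def proj (K : Finset ℕ) (v : ℕ → ℝ) (s : ℕ) : ℝ :=
  sSup (v '' {x | x ∈ K ∧ x ≤ s})

lemma proj_eq_max (m : ℕ) (K : Finset ℕ) (hKsub : ∀ x ∈ K, x ≤ m) (hK0 : 0 ∈ K)
    (v : ℕ → ℝ) (hvmono : ∀ s t : ℕ, s ≤ t → t ≤ m → v s ≤ v t) (s : ℕ)
    (hne : (K.filter (fun x => x ≤ s)).Nonempty) :
    proj K v s = v ((K.filter (fun x => x ≤ s)).max' hne) := by
  set b := (K.filter (fun x => x ≤ s)).max' hne with hb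
  have hbmem := (K.filter (fun x => x ≤ s)).max'_mem hne
  rw [Finset.mem_filter] at hbmem
  have hset : {x | x ∈ K ∧ x ≤ s} = ↑(K.filter (fun x => x ≤ s)) := by
    ext x; simp [Finset.mem_filter]
  have hfin : ({x | x ∈ K ∧ x ≤ s}).Finite := by
    rw [hset]; exact (K.filter (fun x => x ≤ s)).finite_toSet
  apply le_antisymm
  · apply csSup_le
    · exact ⟨v 0, ⟨0, ⟨hK0, Nat.zero_le _⟩, rfl⟩⟩
    · rintro y ⟨x, ⟨hxK, hxs⟩, rfl⟩
      have hxb : x ≤ b := Finset.le_max' (K.filter (fun y => y ≤ s)) x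
        (Finset.mem_filter.mpr ⟨hxK, hxs⟩)
      exact hvmono x b hxb (hKsub b hbmem.1)
  · apply le_csSup ((hfin.image v).bddAbove)
    exact ⟨b, ⟨hbmem.1, hbmem.2⟩, rfl⟩

/-- projection onto a set of quantities preserves single-crossing
dominance: if `v̄(s̄) − v̄(s) ≥ v(s̄) − v(s)` for all `s̄ > s`, then the same
holds for `v̄^K` and `v^K`; hence projecting a single-crossing domain yields a
single-crossing domain with the inherited order. -/
theorem proj_preserves_single_crossing
    (m : ℕ) (K : Finset ℕ) (hKsub : ∀ x ∈ K, x ≤ m) (hK0 : 0 ∈ K)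
    (v vb : ℕ → ℝ)
    (hv0 : v 0 = 0) (hvmono : ∀ s t : ℕ, s ≤ t → t ≤ m → v s ≤ v t)
    (hvb0 : vb 0 = 0) (hvbmono : ∀ s t : ℕ, s ≤ t → t ≤ m → vb s ≤ vb t)
    (hsc : ∀ s t : ℕ, s < t → t ≤ m → v t - v s ≤ vb t - vb s) :
    ∀ s t : ℕ, s < t → t ≤ m →
      proj K v t - proj K v s ≤ proj K vb t - proj K vb s := by
  intro s t hst htm
  have hnes : (K.filter (fun x => x ≤ s)).Nonempty :=
    ⟨0, Finset.mem_filter.mpr ⟨hK0, Nat.zero_le _⟩⟩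
  have hnet : (K.filter (fun x => x ≤ t)).Nonempty :=
    ⟨0, Finset.mem_filter.mpr ⟨hK0, Nat.zero_le _⟩⟩
  set a := (K.filter (fun x => x ≤ s)).max' hnes with ha
  set b := (K.filter (fun x => x ≤ t)).max' hnet with hb
  have hamem := (K.filter (fun x => x ≤ s)).max'_mem hnes
  have hbmem := (K.filter (fun x => x ≤ t)).max'_mem hnet
  rw [Finset.mem_filter] at hamem hbmem
  have hab : a ≤ b := Finset.le_max' (K.filter (fun y => y ≤ t)) a
    (Finset.mem_filter.mpr ⟨hamem.1, le_trans hamem.2 (le_of_lt hst)⟩)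
  rw [proj_eq_max m K hKsub hK0 v hvmono s hnes,
      proj_eq_max m K hKsub hK0 v hvmono t hnet,
      proj_eq_max m K hKsub hK0 vb hvbmono s hnes,
      proj_eq_max m K hKsub hK0 vb hvbmono t hnet]
  rcases eq_or_lt_of_le hab with h | h
  · rw [← ha, ← hb, h]; simp
  · exact hsc a b h (hKsub b hbmem.1)
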